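/- Let s = i·√7 ∈ ℂ (so s² = -7) and let q(x,y,z) = (x⁴ + y⁴ + z⁴) - (3/2)·(1 - s)·(x²y² + x²z² + y²z²), a quartic form over ℂ. If (a,b,c) ∈ ℂ³ is a point at which all three partial derivatives ∂q/∂x, ∂q/∂y, ∂q/∂z vanish, then a = b = c = 0. In other words, the plane quartic curve q = 0 in ℙ² over ℂ is smooth. -/

import Mathlib

/-!
The partial derivative of `x⁴ + y⁴ + z⁴ - t (x²y² + x²z² + y²z²)` in `x` factors as
`2x (2x² - t (y² + z²))`, so at a critical point each of the squares `x², y², z²` is either `0`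
or satisfies a linear equation in the three squares. Eliminating case by case, a nonzero solution
forces `t ∈ {1, 2, -2}`; but `t = (3/2)(1 - i√7)` is not even real.
-/

open Complex

/-- `s = i√7`, a square root of `-7` in `ℂ`. -/
noncomputable def s : ℂ := Complex.I * (Real.sqrt 7 : ℝ)

/-- The quartic form `q(x,y,z) = x⁴+y⁴+z⁴ - (3/2)(1-s)(x²y²+x²z²+y²z²)`. -/
noncomputable def q (x y z : ℂ) : ℂ :=
  (x ^ 4 + y ^ 4 + z ^ 4)
    - (3 / 2 : ℂ) * (1 - s) * (x ^ 2 * y ^ 2 + x ^ 2 * z ^ 2 + y ^ 2 * z ^ 2)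

def symQuartic {R : Type*} [CommRing R] (t x y z : R) : R :=
  (x ^ 4 + y ^ 4 + z ^ 4) - t * (x ^ 2 * y ^ 2 + x ^ 2 * z ^ 2 + y ^ 2 * z ^ 2)

section symQuartic

variable {R : Type*} [CommRing R]

theorem symQuartic_swap (t x y z : R) : symQuartic t x y z = symQuartic t y x z := by
  unfold symQuartic; ring

theorem symQuartic_rotate (t x y z : R) : symQuartic t x y z = symQuartic t z x y := by
  unfold symQuartic; ring

end symQuartic

section Derivative

variable {𝕜 : Type*} [NontriviallyNormedField 𝕜]

theorem hasDerivAt_symQuartic (t y z x : 𝕜) :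
    HasDerivAt (fun x => symQuartic t x y z) (2 * x * (2 * x ^ 2 - t * (y ^ 2 + z ^ 2))) x := by
  have hx2 := hasDerivAt_pow 2 x
  refine ((((hasDerivAt_pow 4 x).add_const (y ^ 4)).add_const (z ^ 4)).sub
    ((((hx2.mul_const (y ^ 2)).add (hx2.mul_const (z ^ 2))).add_const (y ^ 2 * z ^ 2)).const_mul
      t)).congr_deriv ?_
  push_cast
  ring

theorem sq_eq_zero_or_of_deriv_symQuartic_eq_zero [NeZero (2 : 𝕜)] {t y z x : 𝕜}
    (h : deriv (fun x => symQuartic t x y z) x = 0) :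
    x ^ 2 = 0 ∨ 2 * x ^ 2 = t * (y ^ 2 + z ^ 2) := by
  rw [(hasDerivAt_symQuartic t y z x).deriv] at h
  rcases mul_eq_zero.1 h with h | h
  · have hx : x = 0 := (mul_eq_zero.1 h).resolve_left two_ne_zero
    exact .inl (by simp [hx])
  · exact .inr (sub_eq_zero.1 h)

end Derivative

/-- The critical equations of `symQuartic t`, in the squares `u = x², v = y², w = z²`. -/
theorem eq_zero_of_critical {K : Type*} [Field K] [NeZero (2 : K)] {t u v w : K}
    (ht₁ : t ≠ 1) (ht₂ : t ≠ 2) (ht₃ : t ≠ -2)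
    (hu : u = 0 ∨ 2 * u = t * (v + w)) (hv : v = 0 ∨ 2 * v = t * (u + w))
    (hw : w = 0 ∨ 2 * w = t * (u + v)) : u = 0 := by
  have h₁ : 1 - t ≠ 0 := fun h => ht₁ (by linear_combination -h)
  have h₂ : 2 - t ≠ 0 := fun h => ht₂ (by linear_combination -h)
  have h₃ : 2 + t ≠ 0 := fun h => ht₃ (by linear_combination h)
  rcases hu with hu | hu
  · exact hu
  have h2 : (2 : K) ≠ 0 := two_ne_zero
  rcases hv with rfl | hv <;> rcases hw with rfl | hw
  · simpa [h2] using hu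
  · have : (2 - t) * (2 + t) * u = 0 := by linear_combination 2 * hu + t * hw
    exact eq_zero_of_ne_zero_of_mul_left_eq_zero (mul_ne_zero h₂ h₃) this
  · have : (2 - t) * (2 + t) * u = 0 := by linear_combination 2 * hu + t * hv
    exact eq_zero_of_ne_zero_of_mul_left_eq_zero (mul_ne_zero h₂ h₃) this
  · have hvw : v = w := sub_eq_zero.1 <|
      eq_zero_of_ne_zero_of_mul_left_eq_zero h₃ (by linear_combination hv - hw)
    subst hvw
    have hv0 : v = 0 :=
      eq_zero_of_ne_zero_of_mul_left_eq_zero (mul_ne_zero h2 (mul_ne_zero h₁ h₃)) <| by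
        linear_combination 2 * hv + t * hu
    simpa [hv0, h2] using hu

theorem coeff_ne_ofReal (r : ℝ) : (3 / 2 : ℂ) * (1 - s) ≠ r := by
  intro h
  have := congrArg Complex.im h
  simp [s] at this

theorem stmt_8 (a b c : ℂ)
    (hx : deriv (fun x => q x b c) a = 0)
    (hy : deriv (fun y => q a y c) b = 0)
    (hz : deriv (fun z => q a b z) c = 0) :
    a = 0 ∧ b = 0 ∧ c = 0 := by
  set t : ℂ := (3 / 2 : ℂ) * (1 - s)
  have ht₁ : t ≠ 1 := by simpa using coeff_ne_ofReal 1
  have ht₂ : t ≠ 2 := by simpa using coeff_ne_ofReal 2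
  have ht₃ : t ≠ -2 := by simpa using coeff_ne_ofReal (-2)
  have Ea := sq_eq_zero_or_of_deriv_symQuartic_eq_zero (t := t) hx
  have hqy : (fun y => q a y c) = fun y => symQuartic t y a c :=
    funext fun y => symQuartic_swap t a y c
  have hqz : (fun z => q a b z) = fun z => symQuartic t z a b :=
    funext fun z => symQuartic_rotate t a b z
  have Eb := sq_eq_zero_or_of_deriv_symQuartic_eq_zero (hqy ▸ hy)
  have Ec := sq_eq_zero_or_of_deriv_symQuartic_eq_zero (hqz ▸ hz)
  refine ⟨pow_eq_zero_iff two_ne_zero |>.1 ?_, pow_eq_zero_iff two_ne_zero |>.1 ?_,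
    pow_eq_zero_iff two_ne_zero |>.1 ?_⟩
  · exact eq_zero_of_critical ht₁ ht₂ ht₃ Ea Eb Ec
  · exact eq_zero_of_critical ht₁ ht₂ ht₃ Eb Ea (by rwa [add_comm] at Ec)
  · exact eq_zero_of_critical ht₁ ht₂ ht₃ Ec (by rwa [add_comm] at Ea) (by rwa [add_comm] at Eb)
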